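/- Let T = conv{A₁,A₂,A₃} ⊂ ℝ² be a triangle with affinely independent vertices whose three interior angles are all at most π/2, let D be a point in the relative interior of e₁ = [A₂,A₃] and E a point in the relative interior of e₂ = [A₁,A₃], let K = conv{E,D,A₃}, let t be a unit vector parallel to D − E, n a unit vector orthogonal to t, x_T a point of [D,E], and let β₁ > 0, β₂ > 0. If a pair (φ₁,φ₂) ∈ RT × RT satisfies the IFE interface conditions and N₁(φ) = N₂(φ) = N₃(φ) = 0, then φ₁ = 0 and φ₂ = 0. Consequently a pair in RT × RT satisfying the IFE interface conditions is uniquely determined by its three degrees of freedom. -/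

import Mathlib

open Real MeasureTheory RealInnerProductSpace

noncomputable section

abbrev V2 : Type := EuclideanSpace ℝ (Fin 2)

/-- The lowest-order Raviart–Thomas shape function with data `(c, b)`: `x ↦ c + b • x`
(its divergence is the constant `2 * b`). -/
def rt (c : V2) (b : ℝ) : V2 → V2 := fun x => c + b • x

/-- Arclength line integral of a scalar function over the segment `[P, Q]`. -/
def lineInt (f : V2 → ℝ) (P Q : V2) : ℝ :=
  (∫ s in (0:ℝ)..1, f (P + s • (Q - P))) * ‖Q - P‖

/-- First degree of freedom of the piecewise pair `(φ₁, φ₂)` (with `φ₁` on `K` and `φ₂` on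
`T∖K`): `N₁(φ) = (1/|e₁|)(∫_{[A₂,D]} φ₂·n₁ ds + ∫_{[D,A₃]} φ₁·n₁ ds)`. -/
def dof1 (A₂ A₃ D n₁ : V2) (c₁ : V2) (b₁ : ℝ) (c₂ : V2) (b₂ : ℝ) : ℝ :=
  (1 / ‖A₃ - A₂‖) *
    (lineInt (fun x => ⟪rt c₂ b₂ x, n₁⟫) A₂ D + lineInt (fun x => ⟪rt c₁ b₁ x, n₁⟫) D A₃)

/-- `N₂(φ) = (1/|e₂|)(∫_{[A₁,E]} φ₂·n₂ ds + ∫_{[E,A₃]} φ₁·n₂ ds)`. -/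
def dof2 (A₁ A₃ E n₂ : V2) (c₁ : V2) (b₁ : ℝ) (c₂ : V2) (b₂ : ℝ) : ℝ :=
  (1 / ‖A₃ - A₁‖) *
    (lineInt (fun x => ⟪rt c₂ b₂ x, n₂⟫) A₁ E + lineInt (fun x => ⟪rt c₁ b₁ x, n₂⟫) E A₃)

/-- `N₃(φ) = (1/|e₃|) ∫_{[A₁,A₂]} φ₂·n₃ ds`. -/
def dof3 (A₁ A₂ n₃ : V2) (c₂ : V2) (b₂ : ℝ) : ℝ :=
  (1 / ‖A₂ - A₁‖) * lineInt (fun x => ⟪rt c₂ b₂ x, n₃⟫) A₁ A₂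

/-- The IFE interface conditions for the pair `(φ₁, φ₂) = (rt c₁ b₁, rt c₂ b₂)`:
(i) `⟨φ₁(x) - φ₂(x), n⟩ = 0` on the segment `[D, E]`;
(ii) `β₁⟨φ₁(x_T), t⟩ = β₂⟨φ₂(x_T), t⟩`;
(iii) `div φ₁ = div φ₂`. -/
def ifeCond (D E xT t n : V2) (β₁ β₂ : ℝ) (c₁ : V2) (b₁ : ℝ) (c₂ : V2) (b₂ : ℝ) : Prop :=
  (∀ x ∈ segment ℝ D E, ⟪rt c₁ b₁ x - rt c₂ b₂ x, n⟫ = 0) ∧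
    β₁ * ⟪rt c₁ b₁ xT, t⟫ = β₂ * ⟪rt c₂ b₂ xT, t⟫ ∧
    2 * b₁ = 2 * b₂

/-!
By (iii) both fields have the same divergence `2 b`, and by (i) their difference is a constant
multiple `σ (D - E)` of the interface direction. On the lines `e₁`, `e₂` the normal components
do not depend on the point, so writing `D`, `E` as the points dividing `e₁`, `e₂` in the ratios
`d`, `e`, the conditions `N₁ = N₂ = 0` determine `φ₂(A₃) = (1 - d)(1 - e) σ (A₁ - A₂)`, and then
`N₃ = 0` forces `b = 0`. With `τ = D - E` and `u = (1 - d)(1 - e)(A₂ - A₁)`, condition (ii)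
becomes `σ (β₁ ⟪τ - u, τ⟫ + β₂ ⟪u, τ⟫) = 0`. The maximum angle condition puts `⟪u, τ⟫` in
`[0, ‖τ‖²]`, so the bracket is positive and `σ = 0`. Uniqueness follows by linearity.
-/

section InnerProductSpace

variable {F : Type*} [NormedAddCommGroup F] [InnerProductSpace ℝ F]

lemma InnerProductGeometry.inner_nonneg_of_angle_le_pi_div_two {x y : F}
    (h : InnerProductGeometry.angle x y ≤ π / 2) : 0 ≤ ⟪x, y⟫ := by
  rw [← InnerProductGeometry.cos_angle_mul_norm_mul_norm]
  exact mul_nonneg (Real.cos_nonneg_of_neg_pi_div_two_le_of_le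
    (by linarith [InnerProductGeometry.angle_nonneg x y]) h) (by positivity)

lemma EuclideanGeometry.inner_nonneg_of_angle_le_pi_div_two {A B C : F}
    (h : EuclideanGeometry.angle A B C ≤ π / 2) : 0 ≤ ⟪A - B, C - B⟫ :=
  InnerProductGeometry.inner_nonneg_of_angle_le_pi_div_two h

lemma eq_zero_of_inner_eq_zero_of_inner_ne_zero [Fact (Module.finrank ℝ F = 2)] {u v w a : F}
    (hv : v ≠ 0) (hva : ⟪v, a⟫ = 0) (hwa : ⟪w, a⟫ ≠ 0) (hvu : ⟪v, u⟫ = 0) (hwu : ⟪w, u⟫ = 0) :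
    u = 0 := by
  have ha : a ≠ 0 := by rintro rfl; simp at hwa
  obtain ⟨r, rfl⟩ := Submodule.mem_span_singleton.1
    (Submodule.mem_span_singleton_of_inner_eq_zero_of_inner_eq_zero hv ha hvu hva)
  rw [real_inner_smul_right, mul_eq_zero] at hwu
  simp [hwu.resolve_right hwa]

/- The hypotheses on `p`, `q` say that the triangle with vertices `0`, `p`, `q` has no obtuse
angle; `α p - ε q` joins points on its two sides through `0`. -/
lemma inner_sub_smul_sub_smul_mem_Icc {p q : F} {α ε : ℝ} (hα₀ : 0 ≤ α) (hα₁ : α ≤ 1)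
    (hε₀ : 0 ≤ ε) (hε₁ : ε ≤ 1) (hpq : 0 ≤ ⟪q, p⟫) (hp : 0 ≤ ⟪q - p, -p⟫)
    (hq : 0 ≤ ⟪p - q, -q⟫) :
    ⟪(α * ε) • (p - q), α • p - ε • q⟫ ∈ Set.Icc 0 ⟪α • p - ε • q, α • p - ε • q⟫ := by
  simp only [inner_sub_left, inner_sub_right, inner_neg_right, real_inner_smul_left,
    real_inner_smul_right, real_inner_comm p q, Set.mem_Icc] at hpq hp hq ⊢
  constructor
  · nlinarith [mul_nonneg hα₀ hε₀, mul_nonneg hα₀ hp, mul_nonneg hε₀ hq]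
  · nlinarith [mul_nonneg (mul_nonneg (mul_nonneg hα₀ hα₀) (sub_nonneg.2 hε₁)) hp,
      mul_nonneg (mul_nonneg (mul_nonneg hε₀ hε₀) (sub_nonneg.2 hα₁)) hq,
      mul_nonneg hpq (sq_nonneg (α - ε))]

lemma eq_zero_of_inner_neg_smul_add_smul_eq {u τ : F} {σ β₁ β₂ : ℝ} (hβ₁ : 0 < β₁)
    (hβ₂ : 0 < β₂) (hτ : τ ≠ 0) (hu : ⟪u, τ⟫ ∈ Set.Icc 0 ⟪τ, τ⟫)
    (h : β₁ * ⟪-(σ • u) + σ • τ, τ⟫ = β₂ * ⟪-(σ • u), τ⟫) : σ = 0 := by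
  have hpos : 0 < β₁ * (⟪τ, τ⟫ - ⟪u, τ⟫) + β₂ * ⟪u, τ⟫ := by
    have := real_inner_self_pos.2 hτ
    rcases hu with ⟨hu₀, hu₁⟩
    rcases hu₁.lt_or_eq with hlt | heq
    · nlinarith [mul_pos hβ₁ (sub_pos.2 hlt), mul_nonneg hβ₂.le hu₀]
    · rw [heq, sub_self, mul_zero, zero_add]; positivity
  refine (mul_eq_zero.1 ?_).resolve_right hpos.ne'
  simp only [inner_add_left, inner_neg_left, real_inner_smul_left] at h
  linear_combination h

end InnerProductSpace

instance : Fact (Module.finrank ℝ V2 = 2) := ⟨finrank_euclideanSpace_fin⟩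

lemma rt_eq_add (c : V2) (b : ℝ) (x y : V2) : rt c b x = rt c b y + b • (x - y) := by
  simp only [rt, smul_sub]; abel

lemma rt_sub (c c' : V2) (b b' : ℝ) : rt (c - c') (b - b') = rt c b - rt c' b' := by
  funext x; simp only [rt, Pi.sub_apply, sub_smul]; abel

lemma rt_zero_zero : rt 0 0 = fun _ => (0 : V2) := by
  funext x; simp [rt]

lemma rt_zero_right (c : V2) (x : V2) : rt c 0 x = c := by simp [rt]

lemma rt_add_left (c v : V2) (b : ℝ) (x : V2) : rt (c + v) b x = rt c b x + v := by
  simp only [rt]; abel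

lemma lineInt_inner_rt {c ν P Q R : V2} {b : ℝ} (hP : ⟪ν, P - R⟫ = 0) (hQ : ⟪ν, Q - R⟫ = 0) :
    lineInt (fun x => ⟪rt c b x, ν⟫) P Q = ⟪rt c b R, ν⟫ * ‖Q - P‖ := by
  have hconst (s : ℝ) : ⟪rt c b (P + s • (Q - P)), ν⟫ = ⟪rt c b R, ν⟫ := by
    have hsub : P + s • (Q - P) - R = (1 - s) • (P - R) + s • (Q - R) := by module
    rw [rt_eq_add c b _ R, hsub]
    simp only [inner_add_left, real_inner_smul_left,
      real_inner_comm ν (P - R), real_inner_comm ν (Q - R), hP, hQ]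
    ring
  simp [lineInt, hconst]

lemma lineInt_inner_rt_sub (c c' ν P Q : V2) (b b' : ℝ) :
    lineInt (fun x => ⟪rt (c - c') (b - b') x, ν⟫) P Q =
      lineInt (fun x => ⟪rt c b x, ν⟫) P Q - lineInt (fun x => ⟪rt c' b' x, ν⟫) P Q := by
  have hint (c : V2) (b : ℝ) :
      IntervalIntegrable (fun s : ℝ => ⟪rt c b (P + s • (Q - P)), ν⟫) volume 0 1 :=
    Continuous.intervalIntegrable (by unfold rt; fun_prop) 0 1
  simp only [lineInt, ← sub_mul, ← intervalIntegral.integral_sub (hint c b) (hint c' b'),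
    rt_sub, Pi.sub_apply, inner_sub_left]

section DegreesOfFreedom

variable {A₁ A₂ A₃ X ν c₁ c₂ c₁' c₂' : V2} {b₁ b₂ b₁' b₂' d : ℝ}

lemma dof2_eq_dof1 : dof2 = dof1 := rfl

lemma dof1_eq (hX : A₂ + d • (A₃ - A₂) = X) (hd₀ : 0 ≤ d) (hd₁ : d ≤ 1) (hA : A₃ ≠ A₂)
    (hν : ⟪ν, A₃ - A₂⟫ = 0) :
    dof1 A₂ A₃ X ν c₁ b₁ c₂ b₂ = d * ⟪rt c₂ b₂ A₃, ν⟫ + (1 - d) * ⟪rt c₁ b₁ A₃, ν⟫ := by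
  have hXA₂ : X - A₂ = d • (A₃ - A₂) := by rw [← hX]; abel
  have hA₃X : A₃ - X = (1 - d) • (A₃ - A₂) := by rw [← hX]; module
  have hA₂ : ⟪ν, A₂ - A₃⟫ = 0 := by rw [← neg_sub, inner_neg_right, hν, neg_zero]
  have hX' : ⟪ν, X - A₃⟫ = 0 := by
    rw [← neg_sub, inner_neg_right, hA₃X, real_inner_smul_right, hν]; simp
  have hlen : ‖A₃ - A₂‖ ≠ 0 := norm_ne_zero_iff.2 (sub_ne_zero.2 hA)
  rw [dof1, lineInt_inner_rt hA₂ hX', lineInt_inner_rt hX' (by simp), hXA₂, hA₃X,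
    norm_smul, norm_smul, Real.norm_of_nonneg hd₀, Real.norm_of_nonneg (by linarith)]
  field_simp

lemma dof3_eq (hA : A₂ ≠ A₁) (hν : ⟪ν, A₂ - A₁⟫ = 0) :
    dof3 A₁ A₂ ν c₂ b₂ = ⟪rt c₂ b₂ A₁, ν⟫ := by
  have hlen : ‖A₂ - A₁‖ ≠ 0 := norm_ne_zero_iff.2 (sub_ne_zero.2 hA)
  rw [dof3, lineInt_inner_rt (by simp) hν]
  field_simp

lemma dof1_sub : dof1 A₂ A₃ X ν (c₁ - c₁') (b₁ - b₁') (c₂ - c₂') (b₂ - b₂') =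
    dof1 A₂ A₃ X ν c₁ b₁ c₂ b₂ - dof1 A₂ A₃ X ν c₁' b₁' c₂' b₂' := by
  simp only [dof1, lineInt_inner_rt_sub]; ring

lemma dof3_sub : dof3 A₁ A₂ ν (c₂ - c₂') (b₂ - b₂') =
    dof3 A₁ A₂ ν c₂ b₂ - dof3 A₁ A₂ ν c₂' b₂' := by
  simp only [dof3, lineInt_inner_rt_sub]; ring

end DegreesOfFreedom

section Interface

variable {D E xT t n c₁ c₂ c₁' c₂' : V2} {β₁ β₂ b₁ b₂ b₁' b₂' : ℝ}

lemma ifeCond.sub (h : ifeCond D E xT t n β₁ β₂ c₁ b₁ c₂ b₂)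
    (h' : ifeCond D E xT t n β₁ β₂ c₁' b₁' c₂' b₂') :
    ifeCond D E xT t n β₁ β₂ (c₁ - c₁') (b₁ - b₁') (c₂ - c₂') (b₂ - b₂') := by
  obtain ⟨hjump, htan, hdiv⟩ := h
  obtain ⟨hjump', htan', hdiv'⟩ := h'
  refine ⟨fun x hx => ?_, ?_, by linarith⟩
  · have hrw : rt c₁ b₁ x - rt c₁' b₁' x - (rt c₂ b₂ x - rt c₂' b₂' x) =
        (rt c₁ b₁ x - rt c₂ b₂ x) - (rt c₁' b₁' x - rt c₂' b₂' x) := by abel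
    rw [rt_sub, rt_sub, Pi.sub_apply, Pi.sub_apply, hrw, inner_sub_left, hjump x hx,
      hjump' x hx, sub_zero]
  · simp only [rt_sub, Pi.sub_apply, inner_sub_left]
    linear_combination htan - htan'

lemma ifeCond.exists_eq_add_smul (h : ifeCond D E xT t n β₁ β₂ c₁ b₁ c₂ b₂) (hn : n ≠ 0)
    (hDE : D - E ≠ 0) (hnDE : ⟪n, D - E⟫ = 0) : b₁ = b₂ ∧ ∃ σ : ℝ, c₁ = c₂ + σ • (D - E) := by
  obtain ⟨hjump, -, hdiv⟩ := h
  obtain rfl : b₁ = b₂ := by linarith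
  refine ⟨rfl, ?_⟩
  have hD := hjump D (left_mem_segment ℝ D E)
  simp only [rt, add_sub_add_right_eq_sub, real_inner_comm n] at hD
  obtain ⟨σ, hσ⟩ := Submodule.mem_span_singleton.1
    (Submodule.mem_span_singleton_of_inner_eq_zero_of_inner_eq_zero hn hDE hD hnDE)
  exact ⟨σ, by rw [hσ]; abel⟩

end Interface

section Uniqueness

variable {A₁ A₂ A₃ D E t n xT n₁ n₂ n₃ : V2} {β₁ β₂ : ℝ}

lemma rt_eq_of_dof_eq
    (hzero : ∀ (c₁ c₂ : V2) (b₁ b₂ : ℝ), ifeCond D E xT t n β₁ β₂ c₁ b₁ c₂ b₂ →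
      dof1 A₂ A₃ D n₁ c₁ b₁ c₂ b₂ = 0 → dof2 A₁ A₃ E n₂ c₁ b₁ c₂ b₂ = 0 →
      dof3 A₁ A₂ n₃ c₂ b₂ = 0 → rt c₁ b₁ = (fun _ => (0 : V2)) ∧ rt c₂ b₂ = (fun _ => (0 : V2)))
    (c₁ c₂ c₁' c₂' : V2) (b₁ b₂ b₁' b₂' : ℝ)
    (h : ifeCond D E xT t n β₁ β₂ c₁ b₁ c₂ b₂) (h' : ifeCond D E xT t n β₁ β₂ c₁' b₁' c₂' b₂')
    (h₁ : dof1 A₂ A₃ D n₁ c₁ b₁ c₂ b₂ = dof1 A₂ A₃ D n₁ c₁' b₁' c₂' b₂')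
    (h₂ : dof2 A₁ A₃ E n₂ c₁ b₁ c₂ b₂ = dof2 A₁ A₃ E n₂ c₁' b₁' c₂' b₂')
    (h₃ : dof3 A₁ A₂ n₃ c₂ b₂ = dof3 A₁ A₂ n₃ c₂' b₂') :
    rt c₁ b₁ = rt c₁' b₁' ∧ rt c₂ b₂ = rt c₂' b₂' := by
  obtain ⟨h₁', h₂'⟩ := hzero _ _ _ _ (h.sub h') (by rw [dof1_sub, h₁, sub_self])
    (by rw [dof2_eq_dof1, dof1_sub, ← dof2_eq_dof1, h₂, sub_self]) (by rw [dof3_sub, h₃, sub_self])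
  rw [rt_sub] at h₁' h₂'
  exact ⟨sub_eq_zero.1 h₁', sub_eq_zero.1 h₂'⟩

end Uniqueness

section Triangle

variable {A₁ A₂ A₃ D E n₁ n₂ n₃ c₂ : V2} {b d e σ : ℝ}

lemma sub_eq_of_mem_edges (hD : A₂ + d • (A₃ - A₂) = D) (hE : A₁ + e • (A₃ - A₁) = E) :
    D - E = (1 - d) • (A₂ - A₃) - (1 - e) • (A₁ - A₃) := by
  rw [← hD, ← hE]; module

lemma sub_ne_zero_of_mem_edges (hD : A₂ + d • (A₃ - A₂) = D) (hE : A₁ + e • (A₃ - A₁) = E)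
    (hd : d ≠ 1) (hn₂e : ⟪n₂, A₃ - A₁⟫ = 0) (hn₂o : ⟪n₂, A₂ - A₁⟫ ≠ 0) : D - E ≠ 0 := by
  intro h
  have h₂ := congrArg (⟪n₂, ·⟫) (sub_eq_of_mem_edges hD hE)
  simp only [h, inner_zero_right, inner_sub_right, real_inner_smul_right] at h₂ hn₂e hn₂o
  have h₃ : (1 - d) * (⟪n₂, A₂⟫ - ⟪n₂, A₁⟫) = 0 := by linear_combination -h₂ + (e - d) * hn₂e
  exact hn₂o ((mul_eq_zero.1 h₃).resolve_left (sub_ne_zero.2 hd.symm))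

lemma inner_sub_mem_Icc_of_angle_le_pi_div_two
    (hang₁ : EuclideanGeometry.angle A₂ A₁ A₃ ≤ π / 2)
    (hang₂ : EuclideanGeometry.angle A₁ A₂ A₃ ≤ π / 2)
    (hang₃ : EuclideanGeometry.angle A₁ A₃ A₂ ≤ π / 2)
    (hD : A₂ + d • (A₃ - A₂) = D) (hd₀ : 0 ≤ d) (hd₁ : d ≤ 1)
    (hE : A₁ + e • (A₃ - A₁) = E) (he₀ : 0 ≤ e) (he₁ : e ≤ 1) :
    ⟪((1 - d) * (1 - e)) • (A₂ - A₁), D - E⟫ ∈ Set.Icc 0 ⟪D - E, D - E⟫ := by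
  have h₁ := EuclideanGeometry.inner_nonneg_of_angle_le_pi_div_two hang₁
  have h₂ := EuclideanGeometry.inner_nonneg_of_angle_le_pi_div_two hang₂
  have h₃ := EuclideanGeometry.inner_nonneg_of_angle_le_pi_div_two hang₃
  rw [sub_eq_of_mem_edges hD hE, ← sub_sub_sub_cancel_right A₂ A₁ A₃]
  refine inner_sub_smul_sub_smul_mem_Icc (by linarith) (by linarith) (by linarith)
    (by linarith) h₃ ?_ ?_
  · rwa [← sub_sub_sub_cancel_right A₁ A₂ A₃, ← neg_sub A₂ A₃] at h₂
  · rwa [← sub_sub_sub_cancel_right A₂ A₁ A₃, ← neg_sub A₁ A₃] at h₁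

lemma eq_zero_and_eq_smul_of_dof_eq_zero (hD : A₂ + d • (A₃ - A₂) = D) (hd₀ : 0 ≤ d) (hd₁ : d ≤ 1)
    (hE : A₁ + e • (A₃ - A₁) = E) (he₀ : 0 ≤ e) (he₁ : e ≤ 1)
    (hn₁e : ⟪n₁, A₃ - A₂⟫ = 0) (hn₁o : ⟪n₁, A₁ - A₂⟫ ≠ 0)
    (hn₂e : ⟪n₂, A₃ - A₁⟫ = 0) (hn₂o : ⟪n₂, A₂ - A₁⟫ ≠ 0)
    (hn₃e : ⟪n₃, A₂ - A₁⟫ = 0) (hn₃o : ⟪n₃, A₃ - A₁⟫ ≠ 0)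
    (h₁ : dof1 A₂ A₃ D n₁ (c₂ + σ • (D - E)) b c₂ b = 0)
    (h₂ : dof2 A₁ A₃ E n₂ (c₂ + σ • (D - E)) b c₂ b = 0)
    (h₃ : dof3 A₁ A₂ n₃ c₂ b = 0) :
    b = 0 ∧ c₂ = -(σ • ((1 - d) * (1 - e)) • (A₂ - A₁)) := by
  have hA₃₂ : A₃ ≠ A₂ := by rintro rfl; exact hn₂o hn₂e
  have hA₂₁ : A₂ ≠ A₁ := by rintro rfl; simp at hn₁o
  have hA₃₁ : A₃ ≠ A₁ := by rintro rfl; simp at hn₃o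
  rw [dof1_eq hD hd₀ hd₁ hA₃₂ hn₁e, rt_add_left] at h₁
  rw [dof2_eq_dof1, dof1_eq hE he₀ he₁ hA₃₁ hn₂e, rt_add_left] at h₂
  rw [dof3_eq hA₂₁ hn₃e, rt_eq_add c₂ b A₁ A₃] at h₃
  have hDE := sub_eq_of_mem_edges hD hE
  have hw : rt c₂ b A₃ = -(σ • ((1 - d) * (1 - e)) • (A₂ - A₁)) := by
    rw [← sub_eq_zero]
    refine eq_zero_of_inner_eq_zero_of_inner_ne_zero (by rintro rfl; simp at hn₁o) hn₁e
      (a := A₃ - A₂) (w := n₂) ?_ ?_ ?_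
    · rw [← sub_sub_sub_cancel_right A₃ A₂ A₁, inner_sub_right, hn₂e, zero_sub, neg_ne_zero]
      exact hn₂o
    · simp only [hDE, real_inner_comm n₁, inner_add_right, inner_sub_right,
        inner_neg_right, real_inner_smul_right] at h₁ hn₁e ⊢
      linear_combination h₁ - σ * (1 - d) * (d - e) * hn₁e
    · simp only [hDE, real_inner_comm n₂, inner_add_right, inner_sub_right,
        inner_neg_right, real_inner_smul_right] at h₂ hn₂e ⊢
      linear_combination h₂ + σ * (1 - e) * (e - d) * hn₂e
  obtain rfl : b = 0 := by
    rw [hw, real_inner_comm, inner_add_right, inner_neg_right, real_inner_smul_right,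
      real_inner_smul_right, hn₃e, real_inner_smul_right, ← neg_sub A₃ A₁, inner_neg_right] at h₃
    simpa [hn₃o] using h₃
  simpa [rt_zero_right] using hw

end Triangle

theorem stmt5_general (A₁ A₂ A₃ D E t n xT n₁ n₂ n₃ : V2) (β₁ β₂ : ℝ)
    (hang1 : EuclideanGeometry.angle A₂ A₁ A₃ ≤ π / 2)
    (hang2 : EuclideanGeometry.angle A₁ A₂ A₃ ≤ π / 2)
    (hang3 : EuclideanGeometry.angle A₁ A₃ A₂ ≤ π / 2)
    (hD : D ∈ openSegment ℝ A₂ A₃) (hE : E ∈ openSegment ℝ A₁ A₃)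
    (htpar : ∃ c : ℝ, D - E = c • t)
    (hn : ‖n‖ = 1) (hnt : ⟪n, t⟫ = 0)
    (hn₁e : ⟪n₁, A₃ - A₂⟫ = 0) (hn₁o : ⟪n₁, A₁ - A₂⟫ < 0)
    (hn₂e : ⟪n₂, A₃ - A₁⟫ = 0) (hn₂o : ⟪n₂, A₂ - A₁⟫ < 0)
    (hn₃e : ⟪n₃, A₂ - A₁⟫ = 0) (hn₃o : ⟪n₃, A₃ - A₁⟫ < 0)
    (hβ₁ : 0 < β₁) (hβ₂ : 0 < β₂) :
    (∀ (c₁ c₂ : V2) (b₁ b₂ : ℝ),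
        ifeCond D E xT t n β₁ β₂ c₁ b₁ c₂ b₂ →
        dof1 A₂ A₃ D n₁ c₁ b₁ c₂ b₂ = 0 →
        dof2 A₁ A₃ E n₂ c₁ b₁ c₂ b₂ = 0 →
        dof3 A₁ A₂ n₃ c₂ b₂ = 0 →
        rt c₁ b₁ = (fun _ => (0 : V2)) ∧ rt c₂ b₂ = (fun _ => (0 : V2))) ∧
      ∀ (c₁ c₂ d₁ d₂ : V2) (b₁ b₂ a₁ a₂ : ℝ),
        ifeCond D E xT t n β₁ β₂ c₁ b₁ c₂ b₂ →
        ifeCond D E xT t n β₁ β₂ d₁ a₁ d₂ a₂ →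
        dof1 A₂ A₃ D n₁ c₁ b₁ c₂ b₂ = dof1 A₂ A₃ D n₁ d₁ a₁ d₂ a₂ →
        dof2 A₁ A₃ E n₂ c₁ b₁ c₂ b₂ = dof2 A₁ A₃ E n₂ d₁ a₁ d₂ a₂ →
        dof3 A₁ A₂ n₃ c₂ b₂ = dof3 A₁ A₂ n₃ d₂ a₂ →
        rt c₁ b₁ = rt d₁ a₁ ∧ rt c₂ b₂ = rt d₂ a₂ := by
  rw [openSegment_eq_image'] at hD hE
  obtain ⟨d, ⟨hd₀, hd₁⟩, hDd⟩ := hD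
  obtain ⟨e, ⟨he₀, he₁⟩, hEe⟩ := hE
  obtain ⟨γ, hγ⟩ := htpar
  have hDE : D - E ≠ 0 := sub_ne_zero_of_mem_edges hDd hEe hd₁.ne hn₂e hn₂o.ne
  refine (fun hzero => ⟨hzero, rt_eq_of_dof_eq hzero⟩) ?_
  intro c₁ c₂ b₁ b₂ hife h₁ h₂ h₃
  obtain ⟨rfl, σ, rfl⟩ := hife.exists_eq_add_smul (by rintro rfl; simp at hn) hDE
    (by rw [hγ, real_inner_smul_right, hnt, mul_zero])
  obtain ⟨rfl, rfl⟩ := eq_zero_and_eq_smul_of_dof_eq_zero hDd hd₀.le hd₁.le hEe he₀.le he₁.le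
    hn₁e hn₁o.ne hn₂e hn₂o.ne hn₃e hn₃o.ne h₁ h₂ h₃
  obtain rfl : σ = 0 := by
    refine eq_zero_of_inner_neg_smul_add_smul_eq hβ₁ hβ₂ hDE
      (inner_sub_mem_Icc_of_angle_le_pi_div_two hang1 hang2 hang3 hDd hd₀.le hd₁.le hEe
        he₀.le he₁.le) ?_
    have htan := hife.2.1
    simp only [rt_zero_right] at htan
    have hτ (v : V2) : ⟪v, D - E⟫ = γ * ⟪v, t⟫ := by rw [hγ, real_inner_smul_right]
    rw [hτ, hτ]
    linear_combination γ * htan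
  simp [rt_zero_zero]

/-- Unisolvence (Lemma 4.3): under the maximum angle condition, a pair in `RT × RT`
satisfying the IFE interface conditions with vanishing degrees of freedom is zero;
consequently such a pair is uniquely determined by its degrees of freedom. -/
theorem stmt5 (A₁ A₂ A₃ D E t n xT n₁ n₂ n₃ : V2) (β₁ β₂ : ℝ)
    (hA : AffineIndependent ℝ ![A₁, A₂, A₃])
    (hang1 : EuclideanGeometry.angle A₂ A₁ A₃ ≤ π / 2)
    (hang2 : EuclideanGeometry.angle A₁ A₂ A₃ ≤ π / 2)
    (hang3 : EuclideanGeometry.angle A₁ A₃ A₂ ≤ π / 2)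
    (hD : D ∈ openSegment ℝ A₂ A₃) (hE : E ∈ openSegment ℝ A₁ A₃)
    (ht : ‖t‖ = 1) (htpar : ∃ c : ℝ, D - E = c • t)
    (hn : ‖n‖ = 1) (hnt : ⟪n, t⟫ = 0)
    (hxT : xT ∈ segment ℝ D E)
    (hn₁ : ‖n₁‖ = 1) (hn₁e : ⟪n₁, A₃ - A₂⟫ = 0) (hn₁o : ⟪n₁, A₁ - A₂⟫ < 0)
    (hn₂ : ‖n₂‖ = 1) (hn₂e : ⟪n₂, A₃ - A₁⟫ = 0) (hn₂o : ⟪n₂, A₂ - A₁⟫ < 0)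
    (hn₃ : ‖n₃‖ = 1) (hn₃e : ⟪n₃, A₂ - A₁⟫ = 0) (hn₃o : ⟪n₃, A₃ - A₁⟫ < 0)
    (hβ₁ : 0 < β₁) (hβ₂ : 0 < β₂) :
    (∀ (c₁ c₂ : V2) (b₁ b₂ : ℝ),
        ifeCond D E xT t n β₁ β₂ c₁ b₁ c₂ b₂ →
        dof1 A₂ A₃ D n₁ c₁ b₁ c₂ b₂ = 0 →
        dof2 A₁ A₃ E n₂ c₁ b₁ c₂ b₂ = 0 →
        dof3 A₁ A₂ n₃ c₂ b₂ = 0 →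
        rt c₁ b₁ = (fun _ => (0 : V2)) ∧ rt c₂ b₂ = (fun _ => (0 : V2))) ∧
      ∀ (c₁ c₂ d₁ d₂ : V2) (b₁ b₂ a₁ a₂ : ℝ),
        ifeCond D E xT t n β₁ β₂ c₁ b₁ c₂ b₂ →
        ifeCond D E xT t n β₁ β₂ d₁ a₁ d₂ a₂ →
        dof1 A₂ A₃ D n₁ c₁ b₁ c₂ b₂ = dof1 A₂ A₃ D n₁ d₁ a₁ d₂ a₂ →
        dof2 A₁ A₃ E n₂ c₁ b₁ c₂ b₂ = dof2 A₁ A₃ E n₂ d₁ a₁ d₂ a₂ →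
        dof3 A₁ A₂ n₃ c₂ b₂ = dof3 A₁ A₂ n₃ d₂ a₂ →
        rt c₁ b₁ = rt d₁ a₁ ∧ rt c₂ b₂ = rt d₂ a₂ :=
  stmt5_general A₁ A₂ A₃ D E t n xT n₁ n₂ n₃ β₁ β₂ hang1 hang2 hang3 hD hE htpar hn hnt hn₁e hn₁o
    hn₂e hn₂o hn₃e hn₃o hβ₁ hβ₂
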